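/- Let G be a 4-manifold with f-vector (f_0,f_1,f_2,f_3,f_4), where f_k is the number of simplices of G with k+1 vertices. Then the Dehn-Sommerville relation −22 f_1 + 33 f_2 − 40 f_3 + 45 f_4 = 0 holds, i.e., the f-vector is perpendicular to (0,−22,33,−40,45). -/
import Mathlib


open scoped Classical

/-- A finite simple graph: a finite vertex set together with a symmetric, irreflexive
adjacency relation supported on the vertex set. -/
structure FGraph (V : Type) where
  verts : Finset V
  Adj : V → V → Prop
  symm : ∀ {a b}, Adj a b → Adj b a
  loopless : ∀ a, ¬ Adj a a
  mem_of_adj : ∀ {a b}, Adj a b → a ∈ verts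

namespace FGraph

variable {V W : Type}

/-- The subgraph induced on the vertices satisfying `P`. -/
noncomputable def induce (G : FGraph V) (P : V → Prop) : FGraph V where
  verts := G.verts.filter P
  Adj a b := G.Adj a b ∧ P a ∧ P b
  symm h := ⟨G.symm h.1, h.2.2, h.2.1⟩
  loopless a h := G.loopless a h.1
  mem_of_adj h := Finset.mem_filter.mpr ⟨G.mem_of_adj h.1, h.2.1⟩

/-- The unit sphere of a vertex: the subgraph induced on its neighbors. -/
noncomputable def unitSphere (G : FGraph V) (v : V) : FGraph V :=
  G.induce (fun w => G.Adj v w)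

/-- The graph with the vertex `v` (and its edges) removed. -/
noncomputable def erase (G : FGraph V) (v : V) : FGraph V :=
  G.induce (fun w => w ≠ v)

/-- Inductive definition of contractibility: the one-point graph is contractible, and a
graph is contractible if some vertex has a contractible unit sphere and contractible
complement. -/
inductive Contractible : FGraph V → Prop
  | single (G : FGraph V) (v : V) (h : G.verts = {v}) : Contractible G
  | step (G : FGraph V) (v : V) (hv : v ∈ G.verts)
      (h1 : Contractible (G.unitSphere v)) (h2 : Contractible (G.erase v)) :
      Contractible G

mutual
  /-- `G` is a `d`-sphere: the empty graph is the `(-1)`-sphere, and a `d`-manifold is a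
  `d`-sphere if removing some vertex renders it contractible. -/
  inductive IsSphere : ℤ → FGraph V → Prop
    | empty (G : FGraph V) (h : G.verts = ∅) : IsSphere (-1) G
    | punctured (d : ℤ) (G : FGraph V) (hm : IsManifold d G) (v : V) (hv : v ∈ G.verts)
        (hc : Contractible (G.erase v)) : IsSphere d G
  /-- For `d ≥ 0`, `G` is a `d`-manifold iff every unit sphere is a `(d-1)`-sphere. -/
  inductive IsManifold : ℤ → FGraph V → Prop
    | intro (d : ℤ) (hd : 0 ≤ d) (G : FGraph V)
        (h : ∀ v ∈ G.verts, IsSphere (d - 1) (G.unitSphere v)) : IsManifold d G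
end

/-- A simplex of `G`: the vertex set of a complete subgraph. -/
def IsSimplex (G : FGraph V) (x : Finset V) : Prop :=
  x.Nonempty ∧ ↑x ⊆ G.verts ∧ ∀ a ∈ x, ∀ b ∈ x, a ≠ b → G.Adj a b

/-- The Barycentric refinement: vertices are the simplices of `G`, two being adjacent iff
one is strictly contained in the other. -/
noncomputable def barycentric (G : FGraph V) : FGraph (Finset V) where
  verts := G.verts.powerset.filter (fun x => G.IsSimplex x)
  Adj x y := G.IsSimplex x ∧ G.IsSimplex y ∧ (x ⊂ y ∨ y ⊂ x)
  symm h := ⟨h.2.1, h.1, h.2.2.symm⟩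
  loopless x h := by rcases h.2.2 with h' | h' <;> exact (ssubset_irrefl x h')
  mem_of_adj h := Finset.mem_filter.mpr ⟨Finset.mem_powerset.mpr h.1.2.1, h.1⟩

/-- Number of simplices of `G` with exactly `j` vertices (so `numSimplices G (k+1)` is
the `f`-vector entry `f_k(G)`). -/
noncomputable def numSimplices (G : FGraph V) (j : ℕ) : ℕ :=
  (G.verts.powerset.filter (fun x => G.IsSimplex x ∧ x.card = j)).card

/-- Euler characteristic `χ(G) = Σ_{k ≥ 0} (-1)^k f_k(G)`, where `f_k` counts the
simplices with `k+1` vertices. -/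
noncomputable def euler (G : FGraph V) : ℤ :=
  ∑ k ∈ Finset.range G.verts.card, (-1 : ℤ) ^ k * G.numSimplices (k + 1)

/-- The level set `{f = c}`: the subgraph of the Barycentric refinement induced by the
simplices on which `f - c` changes sign. -/
noncomputable def levelSet (G : FGraph V) (f : V → ℝ) (c : ℝ) : FGraph (Finset V) :=
  G.barycentric.induce (fun x => (∃ a ∈ x, f a - c < 0) ∧ (∃ b ∈ x, 0 < f b - c))

/-- Graph isomorphism. -/
def Iso (G : FGraph V) (H : FGraph W) : Prop :=
  ∃ φ : V → W, Set.BijOn φ ↑G.verts ↑H.verts ∧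
    ∀ a ∈ G.verts, ∀ b ∈ G.verts, (G.Adj a b ↔ H.Adj (φ a) (φ b))

/-- Zykov join of two graphs: disjoint union plus all edges between the two parts. -/
noncomputable def join (G : FGraph V) (H : FGraph W) : FGraph (V ⊕ W) where
  verts := G.verts.disjSum H.verts
  Adj a b :=
    match a, b with
    | .inl a, .inl b => G.Adj a b
    | .inr a, .inr b => H.Adj a b
    | .inl a, .inr b => a ∈ G.verts ∧ b ∈ H.verts
    | .inr a, .inl b => b ∈ G.verts ∧ a ∈ H.verts
  symm {a b} h := by
    cases a <;> cases b <;> simp_all <;> first | exact G.symm h | exact H.symm h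
  loopless a h := by
    cases a <;> simp_all <;> first | exact G.loopless _ h | exact H.loopless _ h
  mem_of_adj {a b} h := by
    cases a <;> cases b <;> simp_all [Finset.mem_disjSum] <;>
      first | exact G.mem_of_adj h | exact H.mem_of_adj h

/-- Union of two graphs on the same vertex type. -/
noncomputable def union (G H : FGraph V) : FGraph V where
  verts := G.verts ∪ H.verts
  Adj a b := G.Adj a b ∨ H.Adj a b
  symm h := h.imp G.symm H.symm
  loopless a h := h.elim (G.loopless a) (H.loopless a)
  mem_of_adj h :=
    h.elim (fun h' => Finset.mem_union_left _ (G.mem_of_adj h'))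
      (fun h' => Finset.mem_union_right _ (H.mem_of_adj h'))

/-- A `d`-ball: a graph of the form `S - v` for a `d`-sphere `S` and a vertex `v` of `S`
(up to graph isomorphism). -/
def IsBall (d : ℤ) (H : FGraph W) : Prop :=
  ∃ (S : FGraph ℕ) (v : ℕ), IsSphere d S ∧ v ∈ S.verts ∧ Iso H (S.erase v)

/-- A `d`-manifold with boundary: every unit sphere is a `(d-1)`-sphere or a `(d-1)`-ball. -/
def IsManifoldWithBoundary (d : ℤ) (G : FGraph V) : Prop :=
  ∀ v ∈ G.verts, IsSphere (d - 1) (G.unitSphere v) ∨ IsBall (d - 1) (G.unitSphere v)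

/-- The cyclic graph `C_n` on the vertex set `Fin n`. -/
def cycleGraph (n : ℕ) : FGraph (Fin n) where
  verts := Finset.univ
  Adj a b := a ≠ b ∧ ((a.val + 1) % n = b.val ∨ (b.val + 1) % n = a.val)
  symm h := ⟨h.1.symm, h.2.symm⟩
  loopless a h := h.1 rfl
  mem_of_adj _ := Finset.mem_univ _

/-- `G` is a disjoint union of cyclic graphs `C_n` with `n ≥ 4`: the vertex set splits
into pairwise disjoint pieces, edges never cross between pieces, and each piece induces
a graph isomorphic to a `C_n` with `n ≥ 4`. -/
def IsDisjointUnionOfCycles (G : FGraph V) : Prop :=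
  ∃ P : Finset (Finset V),
    (∀ S ∈ P, ↑S ⊆ G.verts) ∧
    (∀ S ∈ P, ∀ T ∈ P, S ≠ T → Disjoint S T) ∧
    (∀ v ∈ G.verts, ∃ S ∈ P, v ∈ S) ∧
    (∀ a b, G.Adj a b → ∀ S ∈ P, a ∈ S → b ∈ S) ∧
    (∀ S ∈ P, ∃ n, 4 ≤ n ∧ Iso (G.induce (· ∈ S)) (cycleGraph n))

/-- Poincaré–Hopf index `i_f(v) = 1 - χ(S^-_f(v))`. -/
noncomputable def pindex (G : FGraph V) (f : V → ℝ) (v : V) : ℤ :=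
  1 - ((G.unitSphere v).induce (fun w => f w < f v)).euler

/-- Curvature `K(v) = Σ_{k ≥ 0} (-1)^k f_{k-1}(S(v))/(k+1)` with `f_{-1} = 1`. -/
noncomputable def curvature (G : FGraph V) (v : V) : ℝ :=
  ∑ k ∈ Finset.range (G.verts.card + 1),
    (-1 : ℝ) ^ k * (if k = 0 then 1 else ((G.unitSphere v).numSimplices k : ℝ)) / (k + 1)

end FGraph

/-- `sign(a + i b) = sign(a) + i sign(b)`. -/
noncomputable def csgn (z : ℂ) : ℂ :=
  ⟨Real.sign z.re, Real.sign z.im⟩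

/-- The set `U = {1+i, 1-i, -1+i, -1-i}` of possible values of `csgn`. -/
noncomputable def signU : Finset ℂ :=
  {1 + Complex.I, 1 - Complex.I, -1 + Complex.I, -1 - Complex.I}

namespace FGraph

variable {V : Type}

/-- The set of values of `sign(ψ - c)` attained on the finite vertex set `x`. -/
noncomputable def signValues (ψ : V → ℂ) (c : ℂ) (x : Finset V) : Finset ℂ :=
  x.image (fun v => csgn (ψ v - c))

/-- The level set `{ψ = c}` of a complex-valued function: the subgraph of the Barycentric
refinement induced by the simplices on which `sign(ψ - c)` takes at least three distinct
values, including `-1+i` and `1-i`. -/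
noncomputable def complexLevelSet (G : FGraph V) (ψ : V → ℂ) (c : ℂ) : FGraph (Finset V) :=
  G.barycentric.induce (fun x =>
    3 ≤ (signValues ψ c x).card ∧
    (-1 + Complex.I) ∈ signValues ψ c x ∧ (1 - Complex.I) ∈ signValues ψ c x)

/-- The level set `{ψ = 0}_e` for a two-element subset `e ⊆ U`: the subgraph of the
Barycentric refinement induced by the simplices on which `sign(ψ)` attains both values
of `e` and at least three distinct values in total. -/
noncomputable def complexLevelSetE (G : FGraph V) (ψ : V → ℂ) (e : Finset ℂ) :
    FGraph (Finset V) :=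
  G.barycentric.induce (fun x =>
    (∀ u ∈ e, u ∈ signValues ψ 0 x) ∧ 3 ≤ (signValues ψ 0 x).card)

/-- `Ψ^{-1}(t)`: the subgraph of the Barycentric refinement induced by the simplices on
which `sign(ψ)` attains all values of `t`. -/
noncomputable def signPreimage (G : FGraph V) (ψ : V → ℂ) (t : Finset ℂ) :
    FGraph (Finset V) :=
  G.barycentric.induce (fun x => ∀ u ∈ t, u ∈ signValues ψ 0 x)

/-- The sign vectors of `F - c` attained on the finite vertex set `x`. -/
noncomputable def vecSignValues {k : ℕ} (F : V → Fin k → ℝ) (c : Fin k → ℝ)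
    (x : Finset V) : Finset (Fin k → ℝ) :=
  x.image (fun v j => Real.sign (F v j - c j))

/-- The level set `{F = c}` of an `ℝ^k`-valued function: the subgraph of the Barycentric
refinement induced by the simplices on which the sign vector of `F - c` takes at least
`k+1` distinct values, including the `k` vectors `(1,…,1,-1,1,…,1)`. -/
noncomputable def vecLevelSet (G : FGraph V) {k : ℕ} (F : V → Fin k → ℝ) (c : Fin k → ℝ) :
    FGraph (Finset V) :=
  G.barycentric.induce (fun x =>
    k + 1 ≤ (vecSignValues F c x).card ∧
    ∀ j : Fin k, (fun i => if i = j then (-1 : ℝ) else 1) ∈ vecSignValues F c x)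

end FGraph

/-- The complete graph on `Fin n`. -/
def completeFGraph (n : ℕ) : FGraph (Fin n) where
  verts := Finset.univ
  Adj a b := a ≠ b
  symm h := h.symm
  loopless a h := h rfl
  mem_of_adj _ := Finset.mem_univ _

/-- Stirling numbers of the second kind. -/
def stirling2 : ℕ → ℕ → ℕ
  | 0, 0 => 1
  | 0, _ + 1 => 0
  | _ + 1, 0 => 0
  | n + 1, m + 1 => (m + 1) * stirling2 n (m + 1) + stirling2 n m

namespace FGraph

variable {V : Type}

/-- The finset of simplices of `G`. -/
noncomputable def simps (G : FGraph V) : Finset (Finset V) :=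
  G.verts.powerset.filter G.IsSimplex

lemma mem_simps {G : FGraph V} {x : Finset V} : x ∈ G.simps ↔ G.IsSimplex x := by
  constructor
  · exact fun h => (Finset.mem_filter.mp h).2
  · intro h
    exact Finset.mem_filter.mpr ⟨Finset.mem_powerset.mpr (fun a ha => h.2.1 ha), h⟩

/-- Euler characteristic as a sum over simplices. -/
noncomputable def E (G : FGraph V) : ℤ :=
  ∑ x ∈ G.simps, (-1) ^ (x.card + 1)

lemma isSimplex_induce {G : FGraph V} {P : V → Prop} {x : Finset V} :
    (G.induce P).IsSimplex x ↔ G.IsSimplex x ∧ ∀ a ∈ x, P a := by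
  constructor
  · rintro ⟨hne, hsub, hadj⟩
    have hP : ∀ a ∈ x, P a := fun a ha => (Finset.mem_filter.mp (hsub ha)).2
    exact ⟨⟨hne, fun a ha => (Finset.mem_filter.mp (hsub ha)).1,
      fun a ha b hb hab => (hadj a ha b hb hab).1⟩, hP⟩
  · rintro ⟨⟨hne, hsub, hadj⟩, hP⟩
    exact ⟨hne, fun a ha => Finset.mem_filter.mpr ⟨hsub ha, hP a ha⟩,
      fun a ha b hb hab => ⟨hadj a ha b hb hab, hP a ha, hP b hb⟩⟩

lemma mem_simps_unitSphere {G : FGraph V} {v : V} {y : Finset V} :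
    y ∈ (G.unitSphere v).simps ↔ G.IsSimplex y ∧ ∀ a ∈ y, G.Adj v a := by
  rw [mem_simps]; exact isSimplex_induce

lemma notMem_of_mem_simps_unitSphere {G : FGraph V} {v : V} {y : Finset V}
    (hy : y ∈ (G.unitSphere v).simps) : v ∉ y := fun hv =>
  G.loopless v ((mem_simps_unitSphere.mp hy).2 v hv)

lemma erase_mem_simps_unitSphere {G : FGraph V} {x : Finset V} {a : V}
    (hx : x ∈ G.simps) (ha : a ∈ x) (h2 : 2 ≤ x.card) :
    x.erase a ∈ (G.unitSphere a).simps := by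
  obtain ⟨hne, hsub, hadj⟩ := mem_simps.mp hx
  rw [mem_simps_unitSphere]
  refine ⟨⟨?_, fun b hb => hsub (Finset.mem_of_mem_erase hb),
    fun b hb c hc hbc => hadj b (Finset.mem_of_mem_erase hb) c (Finset.mem_of_mem_erase hc) hbc⟩,
    fun b hb => hadj a ha b (Finset.mem_of_mem_erase hb) (Finset.ne_of_mem_erase hb).symm⟩
  rw [← Finset.card_pos, Finset.card_erase_of_mem ha]
  omega

lemma insert_mem_simps {G : FGraph V} {v : V} (hv : v ∈ G.verts) {y : Finset V}
    (hy : y ∈ (G.unitSphere v).simps) :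
    insert v y ∈ G.simps.filter (fun x => v ∈ x ∧ 2 ≤ x.card) := by
  obtain ⟨⟨hne, hsub, hadj⟩, hAdj⟩ := mem_simps_unitSphere.mp hy
  have hvy : v ∉ y := notMem_of_mem_simps_unitSphere hy
  refine Finset.mem_filter.mpr ⟨mem_simps.mpr ⟨⟨v, Finset.mem_insert_self v y⟩, ?_, ?_⟩,
    Finset.mem_insert_self v y, ?_⟩
  · intro a ha
    rcases Finset.mem_insert.mp ha with rfl | ha'
    · exact hv
    · exact hsub ha'
  · intro a ha b hb hab
    rcases Finset.mem_insert.mp ha with rfl | ha' <;> rcases Finset.mem_insert.mp hb with rfl | hb'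
    · exact absurd rfl hab
    · exact hAdj b hb'
    · exact G.symm (hAdj a ha')
    · exact hadj a ha' b hb' hab
  · rw [Finset.card_insert_of_notMem hvy]
    have := Finset.card_pos.mpr hne
    omega

/-- Reindexing: simplices of the unit sphere at `v` correspond to simplices of `G`
containing `v` with at least two vertices. -/
lemma reindex (G : FGraph V) {v : V} (hv : v ∈ G.verts) (w : ℕ → ℤ) :
    ∑ y ∈ (G.unitSphere v).simps, w y.card
      = ∑ x ∈ G.simps.filter (fun x => v ∈ x ∧ 2 ≤ x.card), w (x.card - 1) := by
  refine Finset.sum_nbij' (i := fun y => insert v y) (j := fun x => x.erase v)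
    (fun y hy => insert_mem_simps hv hy) ?_ ?_ ?_ ?_
  · intro x hx
    obtain ⟨hx1, hx2, hx3⟩ := Finset.mem_filter.mp hx
    exact erase_mem_simps_unitSphere hx1 hx2 hx3
  · intro y hy
    exact Finset.erase_insert (notMem_of_mem_simps_unitSphere hy)
  · intro x hx
    exact Finset.insert_erase (Finset.mem_filter.mp hx).2.1
  · intro y hy
    rw [Finset.card_insert_of_notMem (notMem_of_mem_simps_unitSphere hy)]
    simp

lemma simps_erase (G : FGraph V) (v : V) :
    (G.erase v).simps = G.simps.filter (fun x => v ∉ x) := by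
  ext x
  rw [mem_simps, Finset.mem_filter, mem_simps, FGraph.erase, isSimplex_induce]
  constructor
  · rintro ⟨h1, h2⟩; exact ⟨h1, fun hvx => h2 v hvx rfl⟩
  · rintro ⟨h1, h2⟩; exact ⟨h1, fun a ha hav => h2 (hav ▸ ha)⟩

lemma filter_small (G : FGraph V) {v : V} (hv : v ∈ G.verts) :
    G.simps.filter (fun x => v ∈ x ∧ ¬ 2 ≤ x.card) = {{v}} := by
  ext x
  rw [Finset.mem_filter, Finset.mem_singleton, mem_simps]
  constructor
  · rintro ⟨⟨hne, -, -⟩, hvx, hc⟩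
    have h1 := Finset.card_pos.mpr hne
    have : x.card = 1 := by omega
    obtain ⟨a, rfl⟩ := Finset.card_eq_one.mp this
    rw [Finset.mem_singleton.mp hvx]
  · rintro rfl
    refine ⟨⟨⟨v, Finset.mem_singleton_self v⟩, ?_, ?_⟩, Finset.mem_singleton_self v, by simp⟩
    · intro a ha
      rw [Finset.mem_singleton.mp ha]; exact hv
    · intro a ha b hb hab
      rw [Finset.mem_singleton.mp ha, Finset.mem_singleton.mp hb] at hab
      exact absurd rfl hab

lemma E_decomp (G : FGraph V) {v : V} (hv : v ∈ G.verts) :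
    E G = E (G.erase v) + 1 - E (G.unitSphere v) := by
  have hsplit := Finset.sum_filter_add_sum_filter_not G.simps (fun x => v ∈ x)
    (fun x => (-1 : ℤ) ^ (x.card + 1))
  have he : ∑ x ∈ G.simps.filter (fun x => v ∉ x), (-1 : ℤ) ^ (x.card + 1) = E (G.erase v) := by
    rw [E, simps_erase]
  have hsplit2 := Finset.sum_filter_add_sum_filter_not (G.simps.filter (fun x => v ∈ x))
    (fun x => 2 ≤ x.card) (fun x => (-1 : ℤ) ^ (x.card + 1))
  rw [Finset.filter_filter, Finset.filter_filter] at hsplit2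
  have hbig : ∑ x ∈ G.simps.filter (fun x => v ∈ x ∧ 2 ≤ x.card), (-1 : ℤ) ^ (x.card + 1)
      = - E (G.unitSphere v) := by
    have h1 : ∑ x ∈ G.simps.filter (fun x => v ∈ x ∧ 2 ≤ x.card), (-1 : ℤ) ^ (x.card + 1)
        = ∑ x ∈ G.simps.filter (fun x => v ∈ x ∧ 2 ≤ x.card), (-1 : ℤ) ^ (x.card - 1) := by
      refine Finset.sum_congr rfl fun x hx => ?_
      have h2 := (Finset.mem_filter.mp hx).2.2
      have : x.card + 1 = (x.card - 1) + 2 := by omega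
      rw [this, pow_add]
      norm_num
    rw [h1, ← reindex G hv (fun j => (-1 : ℤ) ^ j), E]
    rw [← Finset.sum_neg_distrib]
    refine Finset.sum_congr rfl fun y hy => ?_
    rw [pow_succ]
    ring
  have hsmall : ∑ x ∈ G.simps.filter (fun x => v ∈ x ∧ ¬ 2 ≤ x.card), (-1 : ℤ) ^ (x.card + 1)
      = 1 := by
    rw [filter_small G hv]
    simp
  rw [E, ← hsplit, ← hsplit2, he, hbig, hsmall]
  ring

lemma E_contractible {G : FGraph V} (h : G.Contractible) : E G = 1 := by
  induction h with
  | single G v hv =>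
    have hs : G.simps = {{v}} := by
      ext x
      rw [mem_simps, Finset.mem_singleton]
      constructor
      · rintro ⟨hne, hsub, -⟩
        have : x ⊆ {v} := by
          intro a ha
          rw [← hv]; exact hsub ha
        rcases Finset.subset_singleton_iff.mp this with rfl | rfl
        · exact absurd hne (by simp)
        · rfl
      · rintro rfl
        refine ⟨⟨v, Finset.mem_singleton_self v⟩, ?_, ?_⟩
        · intro a ha
          rw [Finset.mem_singleton.mp ha, hv]; exact Finset.mem_singleton_self v
        · intro a ha b hb hab
          rw [Finset.mem_singleton.mp ha, Finset.mem_singleton.mp hb] at hab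
          exact absurd rfl hab
    rw [E, hs]
    simp
  | step G v hv h1 h2 ih1 ih2 =>
    rw [E_decomp G hv, ih1, ih2]
    ring

lemma E_empty {G : FGraph V} (h : G.verts = ∅) : E G = 0 := by
  have hs : G.simps = ∅ := by
    ext x
    simp only [mem_simps, Finset.notMem_empty, iff_false]
    rintro ⟨⟨a, ha⟩, hsub, -⟩
    have := hsub ha
    rw [h] at this
    exact absurd this (Finset.notMem_empty a)
  rw [E, hs]
  simp

lemma E_sphere : ∀ n : ℕ, ∀ (d : ℤ) (G : FGraph V), IsSphere d G → (d + 1).toNat ≤ n →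
    E G = 1 - (-1) ^ (d + 1).toNat := by
  intro n
  induction n with
  | zero =>
    intro d G hS hle
    cases hS with
    | empty G h =>
      rw [E_empty h]
      norm_num
    | punctured d G hm v hv hc =>
      cases hm with
      | intro d hd G h => omega
  | succ m ih =>
    intro d G hS hle
    cases hS with
    | empty G h =>
      rw [E_empty h]
      norm_num
    | punctured d G hm v hv hc =>
      cases hm with
      | intro d hd G h =>
        have hS' := ih (d - 1) (G.unitSphere v) (h v hv) (by omega)
        rw [E_decomp G hv, E_contractible hc, hS']
        have h1 : (d - 1 + 1).toNat = d.toNat := by omega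
        have h2 : (d + 1).toNat = d.toNat + 1 := by omega
        rw [h1, h2, pow_succ]
        ring

lemma card_le_sphere : ∀ n : ℕ, ∀ (d : ℤ) (G : FGraph V), IsSphere d G → (d + 1).toNat ≤ n →
    ∀ x ∈ G.simps, (x.card : ℤ) ≤ d + 1 := by
  intro n
  induction n with
  | zero =>
    intro d G hS hle x hx
    cases hS with
    | empty G h =>
      obtain ⟨⟨a, ha⟩, hsub, -⟩ := mem_simps.mp hx
      have := hsub ha
      rw [h] at this
      exact absurd this (Finset.notMem_empty a)
    | punctured d G hm v hv hc =>
      cases hm with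
      | intro d hd G h => omega
  | succ m ih =>
    intro d G hS hle x hx
    cases hS with
    | empty G h =>
      obtain ⟨⟨a, ha⟩, hsub, -⟩ := mem_simps.mp hx
      have := hsub ha
      rw [h] at this
      exact absurd this (Finset.notMem_empty a)
    | punctured d G hm v hv hc =>
      cases hm with
      | intro d hd G h =>
        obtain ⟨a, ha⟩ := (mem_simps.mp hx).1
        have haV : a ∈ G.verts := (mem_simps.mp hx).2.1 ha
        by_cases h2 : 2 ≤ x.card
        · have hxe := erase_mem_simps_unitSphere hx ha h2
          have hb := ih (d - 1) _ (h a haV) (by omega) _ hxe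
          rw [Finset.card_erase_of_mem ha] at hb
          omega
        · omega

/-- The key double-counting identity. -/
lemma sum_P (G : FGraph V) (w : ℕ → ℤ) :
    ∑ v ∈ G.verts, ∑ y ∈ (G.unitSphere v).simps, w y.card
      = ∑ x ∈ G.simps, (if 2 ≤ x.card then (x.card : ℤ) * w (x.card - 1) else 0) := by
  have h1 : ∀ v ∈ G.verts, ∑ y ∈ (G.unitSphere v).simps, w y.card
      = ∑ x ∈ G.simps, (if v ∈ x ∧ 2 ≤ x.card then w (x.card - 1) else 0) := by
    intro v hv
    rw [reindex G hv w, Finset.sum_filter]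
  rw [Finset.sum_congr rfl h1, Finset.sum_comm]
  refine Finset.sum_congr rfl fun x hx => ?_
  have hsub : x ⊆ G.verts := fun a ha => (mem_simps.mp hx).2.1 ha
  by_cases h2 : 2 ≤ x.card
  · rw [if_pos h2]
    have : ∀ v ∈ G.verts, (if v ∈ x ∧ 2 ≤ x.card then w (x.card - 1) else 0)
        = if v ∈ x then w (x.card - 1) else 0 := by
      intro v hv; simp [h2]
    rw [Finset.sum_congr rfl this, ← Finset.sum_filter,
      Finset.filter_mem_eq_inter, Finset.inter_eq_right.mpr hsub,
      Finset.sum_const, nsmul_eq_mul]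
  · rw [if_neg h2]
    refine Finset.sum_eq_zero fun v hv => ?_
    simp [h2]

lemma numSimplices_eq (G : FGraph V) (j : ℕ) :
    G.numSimplices j = (G.simps.filter (fun x => x.card = j)).card := by
  rw [numSimplices, simps, Finset.filter_filter]

lemma sum_simps_eq (G : FGraph V) (g : ℕ → ℤ) (m : ℕ) (hm : ∀ x ∈ G.simps, x.card < m) :
    ∑ x ∈ G.simps, g x.card = ∑ j ∈ Finset.range m, (G.numSimplices j : ℤ) * g j := by
  rw [← Finset.sum_fiberwise_of_maps_to' (g := fun x : Finset V => x.card)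
      (fun x hx => Finset.mem_range.mpr (hm x hx)) g]
  refine Finset.sum_congr rfl fun j _ => ?_
  rw [numSimplices_eq, Finset.sum_const, nsmul_eq_mul]

lemma sum_singletons (H : FGraph V) :
    ∑ y ∈ H.simps, (if y.card = 1 then (1 : ℤ) else 0) = H.verts.card := by
  rw [← Finset.sum_filter, Finset.sum_const, nsmul_eq_mul, mul_one]
  have hset : H.simps.filter (fun y => y.card = 1) = H.verts.image (fun a => {a}) := by
    ext y
    simp only [Finset.mem_filter, mem_simps, Finset.mem_image]
    constructor
    · rintro ⟨hy, hc⟩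
      obtain ⟨a, rfl⟩ := Finset.card_eq_one.mp hc
      exact ⟨a, hy.2.1 (Finset.mem_singleton_self a), rfl⟩
    · rintro ⟨a, ha, rfl⟩
      refine ⟨⟨⟨a, Finset.mem_singleton_self a⟩, ?_, ?_⟩, Finset.card_singleton a⟩
      · intro b hb
        rw [Finset.mem_singleton.mp hb]; exact ha
      · intro b hb c hc hbc
        rw [Finset.mem_singleton.mp hb, Finset.mem_singleton.mp hc] at hbc
        exact absurd rfl hbc
  rw [hset, Finset.card_image_of_injective _ (fun a b hab => by
    rwa [Finset.singleton_inj] at hab)]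

end FGraph

namespace FGraph

variable {V : Type}

lemma isManifold_of_isSphere {d : ℤ} {G : FGraph V} (hd : d ≠ -1) (h : IsSphere d G) :
    IsManifold d G := by
  cases h with
  | empty G h => exact absurd rfl hd
  | punctured d G hm v hv hc => exact hm

lemma sum_E_unitSpheres (G : FGraph V) :
    ∑ v ∈ G.verts, E (G.unitSphere v)
      = ∑ x ∈ G.simps, (if 2 ≤ x.card then (x.card : ℤ) * (-1) ^ x.card else 0) := by
  calc ∑ v ∈ G.verts, E (G.unitSphere v)
      = ∑ v ∈ G.verts, ∑ y ∈ (G.unitSphere v).simps, (fun j => (-1 : ℤ) ^ (j + 1)) y.card := rfl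
    _ = ∑ x ∈ G.simps,
        (if 2 ≤ x.card then (x.card : ℤ) * (fun j => (-1 : ℤ) ^ (j + 1)) (x.card - 1) else 0) :=
        sum_P G (fun j => (-1 : ℤ) ^ (j + 1))
    _ = _ := by
        refine Finset.sum_congr rfl fun x hx => ?_
        by_cases h2 : 2 ≤ x.card
        · simp only [if_pos h2]
          have hc : x.card - 1 + 1 = x.card := by omega
          rw [hc]
        · simp only [if_neg h2]

lemma sum_card_unitSpheres (G : FGraph V) :
    ∑ v ∈ G.verts, ((G.unitSphere v).verts.card : ℤ)
      = ∑ x ∈ G.simps,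
          (if 2 ≤ x.card then (x.card : ℤ) * (if x.card - 1 = 1 then (1 : ℤ) else 0) else 0) := by
  calc ∑ v ∈ G.verts, ((G.unitSphere v).verts.card : ℤ)
      = ∑ v ∈ G.verts, ∑ y ∈ (G.unitSphere v).simps,
          (fun j => if j = 1 then (1 : ℤ) else 0) y.card := by
        exact Finset.sum_congr rfl fun v hv => (sum_singletons _).symm
    _ = _ := sum_P G (fun j => if j = 1 then (1 : ℤ) else 0)

end FGraph

/-- Dehn–Sommerville for 4-manifolds: the f-vector of any 4-manifold is
perpendicular to `(0, -22, 33, -40, 45)`. -/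
theorem dehn_sommerville_four_manifold {V : Type} (G : FGraph V)
    (hG : FGraph.IsManifold 4 G) :
    (-22 : ℤ) * G.numSimplices 2 + 33 * G.numSimplices 3
      - 40 * G.numSimplices 4 + 45 * G.numSimplices 5 = 0 := by
  have hsph : ∀ v ∈ G.verts, FGraph.IsSphere 3 (G.unitSphere v) := by
    cases hG with
    | intro d hd G h =>
      intro v hv
      have h3 := h v hv
      norm_num at h3
      exact h3
  -- every simplex has at most 5 vertices
  have hbd : ∀ x ∈ G.simps, x.card < 6 := by
    intro x hx
    obtain ⟨a, ha⟩ := (FGraph.mem_simps.mp hx).1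
    have haV : a ∈ G.verts := (FGraph.mem_simps.mp hx).2.1 ha
    by_cases h2 : 2 ≤ x.card
    · have hxe := FGraph.erase_mem_simps_unitSphere hx ha h2
      have hb := FGraph.card_le_sphere 4 3 _ (hsph a haV) (by omega) _ hxe
      rw [Finset.card_erase_of_mem ha] at hb
      omega
    · omega
  -- unit spheres are 3-spheres, with Euler sum 0
  have hE3 : ∀ v ∈ G.verts, FGraph.E (G.unitSphere v) = 0 := by
    intro v hv
    have hE := FGraph.E_sphere 4 3 _ (hsph v hv) (by omega)
    have ht : ((3 : ℤ) + 1).toNat = 4 := by omega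
    rw [ht] at hE
    norm_num at hE
    exact hE
  -- second unit spheres are 2-spheres, with Euler sum 2
  have hE2 : ∀ v ∈ G.verts, ∀ u ∈ (G.unitSphere v).verts,
      FGraph.E ((G.unitSphere v).unitSphere u) = 2 := by
    intro v hv u hu
    have hm3 := FGraph.isManifold_of_isSphere (by norm_num) (hsph v hv)
    cases hm3 with
    | intro d hd Gv h3 =>
      have hs2 : FGraph.IsSphere 2 ((G.unitSphere v).unitSphere u) := by
        have := h3 u hu
        norm_num at this
        exact this
      have hE := FGraph.E_sphere 3 2 _ hs2 (by omega)
      have ht : ((2 : ℤ) + 1).toNat = 3 := by omega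
      rw [ht] at hE
      norm_num at hE
      exact hE
  -- Relation 1: 2 f2 - 3 f3 + 4 f4 - 5 f5 = 0
  have key1 : (0 : ℤ) = ∑ j ∈ Finset.range 6,
      (G.numSimplices j : ℤ) * (if 2 ≤ j then (j : ℤ) * (-1) ^ j else 0) :=
    calc (0 : ℤ) = ∑ v ∈ G.verts, FGraph.E (G.unitSphere v) := (Finset.sum_eq_zero hE3).symm
      _ = ∑ x ∈ G.simps, (if 2 ≤ x.card then (x.card : ℤ) * (-1) ^ x.card else 0) :=
          FGraph.sum_E_unitSpheres G
      _ = _ := FGraph.sum_simps_eq G (fun j : ℕ => if 2 ≤ j then (j : ℤ) * (-1) ^ j else 0) 6 hbd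
  -- counting vertices of unit spheres: Σ_v |S(v)| = 2 f2
  have keyC : ∑ v ∈ G.verts, ((G.unitSphere v).verts.card : ℤ)
      = ∑ j ∈ Finset.range 6, (G.numSimplices j : ℤ) *
          (if 2 ≤ j then (j : ℤ) * (if j - 1 = 1 then (1 : ℤ) else 0) else 0) :=
    calc ∑ v ∈ G.verts, ((G.unitSphere v).verts.card : ℤ)
        = ∑ x ∈ G.simps,
            (if 2 ≤ x.card then (x.card : ℤ) * (if x.card - 1 = 1 then (1 : ℤ) else 0) else 0) :=
          FGraph.sum_card_unitSpheres G
      _ = _ := FGraph.sum_simps_eq G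
            (fun j => if 2 ≤ j then (j : ℤ) * (if j - 1 = 1 then (1 : ℤ) else 0) else 0) 6 hbd
  -- Relation 2 (inner step): Σ over a unit sphere
  have hEinner : ∀ v ∈ G.verts,
      ∑ y ∈ (G.unitSphere v).simps, (if 2 ≤ y.card then (y.card : ℤ) * (-1) ^ y.card else 0)
        = 2 * ((G.unitSphere v).verts.card : ℤ) := by
    intro v hv
    rw [← FGraph.sum_E_unitSpheres]
    rw [Finset.sum_congr rfl (fun u hu => hE2 v hv u hu), Finset.sum_const, nsmul_eq_mul]
    ring
  -- Relation 2: 6 f3 - 12 f4 + 20 f5 = 2 Σ_v |S(v)|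
  have key2 : ∑ v ∈ G.verts, 2 * ((G.unitSphere v).verts.card : ℤ)
      = ∑ j ∈ Finset.range 6, (G.numSimplices j : ℤ) *
          (if 2 ≤ j then (j : ℤ) *
            (if 2 ≤ j - 1 then ((j - 1 : ℕ) : ℤ) * (-1) ^ (j - 1) else 0) else 0) :=
    calc ∑ v ∈ G.verts, 2 * ((G.unitSphere v).verts.card : ℤ)
        = ∑ v ∈ G.verts, ∑ y ∈ (G.unitSphere v).simps,
            (fun j : ℕ => if 2 ≤ j then (j : ℤ) * (-1) ^ j else 0) y.card :=
          Finset.sum_congr rfl fun v hv => (hEinner v hv).symm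
      _ = ∑ x ∈ G.simps, (if 2 ≤ x.card then (x.card : ℤ) *
            (fun j : ℕ => if 2 ≤ j then (j : ℤ) * (-1) ^ j else 0) (x.card - 1) else 0) :=
          FGraph.sum_P G (fun j : ℕ => if 2 ≤ j then (j : ℤ) * (-1) ^ j else 0)
      _ = _ := FGraph.sum_simps_eq G
            (fun j => if 2 ≤ j then (j : ℤ) *
              (if 2 ≤ j - 1 then ((j - 1 : ℕ) : ℤ) * (-1) ^ (j - 1) else 0) else 0) 6 hbd
  rw [← Finset.mul_sum] at key2
  rw [keyC] at key2
  simp only [Finset.sum_range_succ, Finset.sum_range_zero] at key1 key2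
  norm_num at key1 key2
  linarith
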